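/- arXiv:2008.02842 — 4 statements merged into one kernel-verified Lean document; each statement's English description precedes it below -/
import Mathlib

section
/- Let u be a C³ solution of ∂²ₜu - ∂²_z u + m² u = 0 on the half-diamond D_R(I) with base I = [a,ℓ], satisfying at z = ℓ the dynamical boundary condition (β₁' ∂²ₜ - β₁) u(t,ℓ) = -β₂ ∂_z u(t,ℓ) + β₂' ∂_z ∂²ₜ u(t,ℓ). Define the boundary energy ε_ℓ(t) = (1/2)[ -(β₁/β₂) u(t,ℓ)² + ρ⁻¹( (β₁β₂'/√(-β₂β₂')) u(t,ℓ) + √(-β₂β₂') ∂_z u(t,ℓ) )² + ρ⁻¹( -β₁' ∂ₜu(t,ℓ) + β₂' ∂_z∂ₜ u(t,ℓ) )² ]. Then d/dt ε_ℓ(t) = -∂ₜu(t,ℓ) · ∂_z u(t,ℓ). -/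
/-!
The energy depends on `t` only through the boundary traces `V = u(·,ℓ)`, `W = ∂_z u(·,ℓ)`,
`P = ∂ₜu(·,ℓ)` and `Q = ∂_z∂ₜu(·,ℓ)`. By symmetry of mixed partials their time derivatives are
`P`, `Q`, `∂ₜ²u(·,ℓ)` and `∂_z∂ₜ²u(·,ℓ)`, and the boundary condition turns
`-β₁' ∂ₜ²u + β₂' ∂_z∂ₜ²u` into `-β₁ V + β₂ W`. With `r = √(-β₂β₂')` one then has
`(β₁β₂'/r · V + r W)(β₁β₂'/r · P + r Q) + (-β₁' P + β₂' Q)(-β₁ V + β₂ W) = ρ (β₁/β₂ · V P - W P)`,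
so the two `ρ⁻¹` terms cancel the derivative of `-(β₁/β₂) V²/2` and leave `-P W`.
-/

open Function

section PartialDerivatives

variable {𝕜 E : Type*} [NontriviallyNormedField 𝕜] [NormedAddCommGroup E] [NormedSpace 𝕜 E]

theorem DifferentiableAt.hasDerivAt_slice_fst {g : 𝕜 × 𝕜 → E} {t z : 𝕜}
    (hg : DifferentiableAt 𝕜 g (t, z)) :
    HasDerivAt (fun s => g (s, z)) (fderiv 𝕜 g (t, z) (1, 0)) t :=
  hg.hasFDerivAt.comp_hasDerivAt t ((hasDerivAt_id t).prodMk (hasDerivAt_const t z))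

theorem DifferentiableAt.hasDerivAt_slice_snd {g : 𝕜 × 𝕜 → E} {t z : 𝕜}
    (hg : DifferentiableAt 𝕜 g (t, z)) :
    HasDerivAt (fun w => g (t, w)) (fderiv 𝕜 g (t, z) (0, 1)) z :=
  hg.hasFDerivAt.comp_hasDerivAt z ((hasDerivAt_const z t).prodMk (hasDerivAt_id z))

variable {u : 𝕜 → 𝕜 → E}

theorem contDiff_uncurry_deriv_fst {n : WithTop ℕ∞} (hu : ContDiff 𝕜 (n + 1) (uncurry u)) :
    ContDiff 𝕜 n (uncurry fun t z => deriv (fun s => u s z) t) := by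
  have hd : Differentiable 𝕜 (uncurry u) := hu.differentiable (by simp)
  have : (uncurry fun t z => deriv (fun s => u s z) t) =
      fun p => fderiv 𝕜 (uncurry u) p (1, 0) := by
    funext ⟨t, z⟩
    exact (hd (t, z)).hasDerivAt_slice_fst.deriv
  rw [this]
  exact (hu.fderiv_right le_rfl).clm_apply contDiff_const

theorem hasDerivAt_deriv_snd [IsRCLikeNormedField 𝕜] (hu : ContDiff 𝕜 2 (uncurry u))
    (t z : 𝕜) :
    HasDerivAt (fun s => deriv (u s) z) (deriv (fun w => deriv (fun s => u s w) t) z) t := by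
  have hd : Differentiable 𝕜 (uncurry u) := hu.differentiable two_ne_zero
  have hdd : Differentiable 𝕜 (fderiv 𝕜 (uncurry u)) :=
    (hu.fderiv_right (m := 1) le_rfl).differentiable one_ne_zero
  have right : (fun s => deriv (u s) z) = fun s => fderiv 𝕜 (uncurry u) (s, z) (0, 1) :=
    funext fun s => (hd (s, z)).hasDerivAt_slice_snd.deriv
  have left : (fun w => deriv (fun s => u s w) t) = fun w => fderiv 𝕜 (uncurry u) (t, w) (1, 0) :=
    funext fun w => (hd (t, w)).hasDerivAt_slice_fst.deriv
  have hsymm := (hu.contDiffAt (x := (t, z))).isSymmSndFDerivAt (by simp)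
  rw [right, left, ((hdd (t, z)).hasDerivAt_slice_snd.clm_apply (hasDerivAt_const z _)).deriv]
  convert (hdd (t, z)).hasDerivAt_slice_fst.clm_apply (hasDerivAt_const t _) using 1
  simp [hsymm.eq]

end PartialDerivatives

noncomputable def boundaryEnergy (β₁ β₂ β₁' β₂' V W P Q : ℝ) : ℝ :=
  (1/2) * (-(β₁ / β₂) * V ^ 2
    + (β₁' * β₂ - β₁ * β₂')⁻¹ * ((β₁ * β₂' / √(-(β₂ * β₂'))) * V + √(-(β₂ * β₂')) * W) ^ 2
    + (β₁' * β₂ - β₁ * β₂')⁻¹ * (-β₁' * P + β₂' * Q) ^ 2)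

theorem boundaryEnergy_cross_terms {β₁ β₂ β₁' β₂' r V W P Q : ℝ} (hβ₂ : β₂ ≠ 0) (hr : r ≠ 0)
    (hr2 : r ^ 2 = -(β₂ * β₂')) :
    ((β₁ * β₂' / r) * V + r * W) * ((β₁ * β₂' / r) * P + r * Q)
      + (-β₁' * P + β₂' * Q) * (-β₁ * V + β₂ * W)
      = (β₁' * β₂ - β₁ * β₂') * (β₁ / β₂ * V * P - W * P) := by
  field_simp
  linear_combination (β₁ ^ 2 * β₂' * V * P + β₂ * W * Q * r ^ 2) * hr2

theorem hasDerivAt_boundaryEnergy {β₁ β₂ β₁' β₂' : ℝ} (hββ : β₂ * β₂' < 0)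
    (hρ : β₁' * β₂ - β₁ * β₂' ≠ 0) {V W P Q : ℝ → ℝ} {t B T : ℝ}
    (hV : HasDerivAt V (P t) t) (hW : HasDerivAt W (Q t) t)
    (hP : HasDerivAt P B t) (hQ : HasDerivAt Q T t)
    (hbc : β₁' * B - β₁ * V t = -β₂ * W t + β₂' * T) :
    HasDerivAt (fun s => boundaryEnergy β₁ β₂ β₁' β₂' (V s) (W s) (P s) (Q s))
      (-(P t * W t)) t := by
  have hβ₂ : β₂ ≠ 0 := by rintro rfl; simp at hββ
  have hpos : 0 < -(β₂ * β₂') := by linarith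
  have hr2 : √(-(β₂ * β₂')) ^ 2 = -(β₂ * β₂') := Real.sq_sqrt hpos.le
  have hT : -β₁' * B + β₂' * T = -β₁ * V t + β₂ * W t := by linarith
  have hcross := boundaryEnergy_cross_terms (β₁ := β₁) (β₁' := β₁') (V := V t) (W := W t)
    (P := P t) (Q := Q t) hβ₂ (Real.sqrt_pos.mpr hpos).ne' hr2
  have hρinv : (β₁' * β₂ - β₁ * β₂')⁻¹ * (β₁' * β₂ - β₁ * β₂') = 1 := inv_mul_cancel₀ hρ
  unfold boundaryEnergy
  refine (((((hV.pow 2).const_mul _).add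
    ((((hV.const_mul _).add (hW.const_mul _)).pow 2).const_mul _)).add
    ((((hP.const_mul _).add (hQ.const_mul _)).pow 2).const_mul _)).const_mul
    (1 / 2 : ℝ)).congr_deriv ?_
  rw [hT]
  norm_num
  linear_combination (β₁' * β₂ - β₁ * β₂')⁻¹ * hcross
    + (β₁ / β₂ * V t * P t - W t * P t) * hρinv

theorem stmt2_general (u : ℝ → ℝ → ℝ) (a ℓ β₁ β₂ β₁' β₂' : ℝ) (hββ : β₂ * β₂' < 0)
    (hρ : 0 < β₁' * β₂ - β₁ * β₂')
    (hu : ContDiff ℝ 3 (fun p : ℝ × ℝ => u p.1 p.2))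
    (hbc : ∀ t : ℝ, |t| ≤ ℓ - a →
      β₁' * deriv (fun s => deriv (fun s' => u s' ℓ) s) t - β₁ * u t ℓ
        = -β₂ * deriv (u t) ℓ
          + β₂' * deriv (fun w => deriv (fun s => deriv (fun s' => u s' w) s) t) ℓ) :
    ∀ εℓ : ℝ → ℝ,
      (εℓ = fun t => (1/2) *
        ( -(β₁ / β₂) * (u t ℓ)^2
          + (β₁' * β₂ - β₁ * β₂')⁻¹ *
            ((β₁ * β₂' / Real.sqrt (-(β₂ * β₂'))) * u t ℓ
              + Real.sqrt (-(β₂ * β₂')) * deriv (u t) ℓ)^2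
          + (β₁' * β₂ - β₁ * β₂')⁻¹ *
            (-β₁' * deriv (fun s => u s ℓ) t
              + β₂' * deriv (fun w => deriv (fun s => u s w) t) ℓ)^2 )) →
      ∀ t : ℝ, |t| < ℓ - a →
        HasDerivAt εℓ (-(deriv (fun s => u s ℓ) t * deriv (u t) ℓ)) t := by
  rintro εℓ rfl t ht
  have hdt : ContDiff ℝ 2 (uncurry fun t z => deriv (fun s => u s z) t) :=
    contDiff_uncurry_deriv_fst hu
  have hV : HasDerivAt (fun s => u s ℓ) (deriv (fun s => u s ℓ) t) t :=
    ((hu.differentiable (by norm_num)) (t, ℓ)).hasDerivAt_slice_fst.differentiableAt.hasDerivAt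
  have hP : HasDerivAt (fun s => deriv (fun s' => u s' ℓ) s)
      (deriv (fun s => deriv (fun s' => u s' ℓ) s) t) t :=
    ((hdt.differentiable (by norm_num)) (t, ℓ)).hasDerivAt_slice_fst.differentiableAt.hasDerivAt
  exact hasDerivAt_boundaryEnergy hββ hρ.ne' hV
    (hasDerivAt_deriv_snd (hu.of_le (by norm_num)) t ℓ) hP (hasDerivAt_deriv_snd hdt t ℓ)
    (hbc t ht.le)

/-- Time derivative of the boundary energy functional at the dynamical boundary `z = ℓ`. -/
theorem stmt2 (u : ℝ → ℝ → ℝ) (a ℓ msq β₁ β₂ β₁' β₂' : ℝ) (haℓ : a < ℓ)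
    (hmsq : 0 ≤ msq) (hββ : β₂ * β₂' < 0) (hβ12 : β₁ / β₂ ≤ 0)
    (hρ : 0 < β₁' * β₂ - β₁ * β₂')
    (hu : ContDiff ℝ 3 (fun p : ℝ × ℝ => u p.1 p.2))
    (hPDE : ∀ t z : ℝ, |t| ≤ ℓ - a → a + |t| ≤ z → z ≤ ℓ →
      deriv (fun s => deriv (fun s' => u s' z) s) t
        - deriv (deriv (u t)) z + msq * u t z = 0)
    (hbc : ∀ t : ℝ, |t| ≤ ℓ - a →
      β₁' * deriv (fun s => deriv (fun s' => u s' ℓ) s) t - β₁ * u t ℓ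
        = -β₂ * deriv (u t) ℓ
          + β₂' * deriv (fun w => deriv (fun s => deriv (fun s' => u s' w) s) t) ℓ) :
    ∀ εℓ : ℝ → ℝ,
      (εℓ = fun t => (1/2) *
        ( -(β₁ / β₂) * (u t ℓ)^2
          + (β₁' * β₂ - β₁ * β₂')⁻¹ *
            ((β₁ * β₂' / Real.sqrt (-(β₂ * β₂'))) * u t ℓ
              + Real.sqrt (-(β₂ * β₂')) * deriv (u t) ℓ)^2
          + (β₁' * β₂ - β₁ * β₂')⁻¹ *
            (-β₁' * deriv (fun s => u s ℓ) t
              + β₂' * deriv (fun w => deriv (fun s => u s w) t) ℓ)^2 )) →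
      ∀ t : ℝ, |t| < ℓ - a →
        HasDerivAt εℓ (-(deriv (fun s => u s ℓ) t * deriv (u t) ℓ)) t :=
  stmt2_general u a ℓ β₁ β₂ β₁' β₂' hββ hρ hu hbc
end

section
/- Let u be a C² solution of ∂²ₜu - ∂²_z u + m² u = 0 on the left half-diamond D_L(I) with base I = [0,a], satisfying the Robin boundary condition cos α · u(t,0) + sin α · ∂_z u(t,0) = 0 at z = 0 with π/2 ≤ α < π. Define ε(t) = (1/2)∫_0^{a-t} ((∂ₜu)² + (∂_z u)² + m² u²) dz - (1/2) cot α · u(t,0)². Then ε(t) ≥ 0 and ε is non-increasing for 0 ≤ t ≤ a; hence vanishing initial data at t = 0 on [0,a] implies u ≡ 0 on {(t,z) : 0 ≤ t ≤ a, 0 ≤ z ≤ a - t}. -/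
/-!
For a solution, the energy density `e = (∂ₜu)² + (∂_z u)² + m² u²` satisfies the local
conservation law `∂ₜ e = ∂_z (2 ∂ₜu ∂_z u)`. Differentiating `ε` under the integral (Leibniz
rule with the moving endpoint `a - t`) and integrating this flux, the Robin condition
`∂_z u(t, 0) = -cot α · u(t, 0)` makes the flux through `z = 0` cancel the derivative of the
boundary term, leaving `ε' = -½ ((∂ₜu - ∂_z u)² + m² u²)` at `z = a - t`, the characteristic
through which energy leaves. Nonnegativity is clear when `cot α ≤ 0`. With zero initial data
`ε ≡ 0`, so `∂ₜu` vanishes on the half-diamond and `u` keeps its initial value `0`.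
-/

open Set MeasureTheory Real intervalIntegral Filter Topology Function Asymptotics

noncomputable def partialFst (f : ℝ → ℝ → ℝ) (t z : ℝ) : ℝ := deriv (fun s => f s z) t

noncomputable def partialSnd (f : ℝ → ℝ → ℝ) (t z : ℝ) : ℝ := deriv (f t) z

section PartialDerivatives

variable {f : ℝ → ℝ → ℝ}

theorem uncurry_partialFst_eq_fderiv (hf : Differentiable ℝ (uncurry f)) :
    uncurry (partialFst f) = fun p => fderiv ℝ (uncurry f) p (1, 0) := by
  ext ⟨t, z⟩
  exact ((hf (t, z)).hasFDerivAt.comp_hasDerivAt (l := uncurry f) t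
    ((hasDerivAt_id' t).prodMk (hasDerivAt_const t z))).deriv

theorem uncurry_partialSnd_eq_fderiv (hf : Differentiable ℝ (uncurry f)) :
    uncurry (partialSnd f) = fun p => fderiv ℝ (uncurry f) p (0, 1) := by
  ext ⟨t, z⟩
  exact ((hf (t, z)).hasFDerivAt.comp_hasDerivAt (l := uncurry f) z
    ((hasDerivAt_const z t).prodMk (hasDerivAt_id' z))).deriv

theorem hasDerivAt_partialFst (hf : Differentiable ℝ (uncurry f)) (t z : ℝ) :
    HasDerivAt (fun s => f s z) (partialFst f t z) t :=
  ((hf (t, z)).comp t ((hasDerivAt_id' t).prodMk (hasDerivAt_const t z)).differentiableAt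
    (g := uncurry f)).hasDerivAt

theorem hasDerivAt_partialSnd (hf : Differentiable ℝ (uncurry f)) (t z : ℝ) :
    HasDerivAt (f t) (partialSnd f t z) z :=
  ((hf (t, z)).comp z ((hasDerivAt_const z t).prodMk (hasDerivAt_id' z)).differentiableAt
    (g := uncurry f)).hasDerivAt

theorem ContDiff.uncurry_partialFst {m n : WithTop ℕ∞} (hf : ContDiff ℝ m (uncurry f))
    (hmn : n + 1 ≤ m) : ContDiff ℝ n (uncurry (partialFst f)) := by
  rw [uncurry_partialFst_eq_fderiv ((hf.of_le (le_add_self.trans hmn)).differentiable one_ne_zero)]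
  exact (hf.fderiv_right hmn).clm_apply contDiff_const

theorem ContDiff.uncurry_partialSnd {m n : WithTop ℕ∞} (hf : ContDiff ℝ m (uncurry f))
    (hmn : n + 1 ≤ m) : ContDiff ℝ n (uncurry (partialSnd f)) := by
  rw [uncurry_partialSnd_eq_fderiv ((hf.of_le (le_add_self.trans hmn)).differentiable one_ne_zero)]
  exact (hf.fderiv_right hmn).clm_apply contDiff_const

theorem partialSnd_partialFst (hf : ContDiff ℝ 2 (uncurry f)) (t z : ℝ) :
    partialSnd (partialFst f) t z = partialFst (partialSnd f) t z := by
  have hdf : Differentiable ℝ (fderiv ℝ (uncurry f)) :=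
    (hf.fderiv_right (m := 1) le_rfl).differentiable one_ne_zero
  have hslice (v w : ℝ × ℝ) : fderiv ℝ (fun p => fderiv ℝ (uncurry f) p v) (t, z) w
      = fderiv ℝ (fderiv ℝ (uncurry f)) (t, z) w v := by
    rw [fderiv_clm_apply (hdf (t, z)) (differentiableAt_const v)]
    simp
  have hf1 := hf.differentiable two_ne_zero
  have hfst := (hf.uncurry_partialFst (n := 1) le_rfl).differentiable one_ne_zero
  have hsnd := (hf.uncurry_partialSnd (n := 1) le_rfl).differentiable one_ne_zero
  change uncurry (partialSnd (partialFst f)) (t, z) = uncurry (partialFst (partialSnd f)) (t, z)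
  rw [uncurry_partialSnd_eq_fderiv hfst, uncurry_partialFst_eq_fderiv hsnd,
    uncurry_partialFst_eq_fderiv hf1, uncurry_partialSnd_eq_fderiv hf1]
  beta_reduce
  rw [hslice, hslice]
  exact hf.contDiffAt.isSymmSndFDerivAt (by simp) _ _

end PartialDerivatives

section Leibniz

variable {F : ℝ → ℝ → ℝ}

theorem hasDerivAt_integral_of_contDiff (hF : ContDiff ℝ 1 (uncurry F)) (c d t₀ : ℝ) :
    HasDerivAt (fun t => ∫ z in c..d, F t z) (∫ z in c..d, partialFst F t₀ z) t₀ := by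
  have hFc : Continuous (uncurry F) := hF.continuous
  have hF'c : Continuous (uncurry (partialFst F)) :=
    (hF.uncurry_partialFst (n := 0) (by norm_num)).continuous
  obtain ⟨C, hC⟩ := ((isCompact_closedBall t₀ 1).prod isCompact_uIcc).exists_bound_of_continuousOn
    hF'c.continuousOn (s := Metric.closedBall t₀ 1 ×ˢ uIcc c d)
  refine (hasDerivAt_integral_of_dominated_loc_of_deriv_le (bound := fun _ => C)
    (Metric.ball_mem_nhds t₀ one_pos)
    (Eventually.of_forall fun t => (hFc.uncurry_left t).aestronglyMeasurable)
    ((hFc.uncurry_left t₀).intervalIntegrable _ _)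
    (hF'c.uncurry_left t₀).aestronglyMeasurable
    (ae_of_all _ fun z hz t ht => hC (t, z)
      ⟨Metric.ball_subset_closedBall ht, uIoc_subset_uIcc hz⟩)
    intervalIntegrable_const
    (ae_of_all _ fun z _ t _ => hasDerivAt_partialFst (hF.differentiable one_ne_zero) t z)).2

theorem hasDerivAt_integral_upper_of_continuous (hF : Continuous (uncurry F)) {b : ℝ → ℝ}
    {b' t₀ : ℝ} (hb : HasDerivAt b b' t₀) :
    HasDerivAt (fun t => ∫ z in b t₀..b t, F t z) (b' * F t₀ (b t₀)) t₀ := by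
  -- `g` integrates a function that is small near `(t₀, b t₀)` over an interval of length
  -- `O(t - t₀)`, so it is `o(t - t₀)`.
  set g := fun t => ∫ z in b t₀..b t, (F t z - F t₀ (b t₀))
  have hsplit : (fun t => ∫ z in b t₀..b t, F t z)
      = fun t => (b t - b t₀) * F t₀ (b t₀) + g t := by
    ext t
    simp only [g]
    rw [integral_sub ((hF.uncurry_left t).intervalIntegrable _ _) intervalIntegrable_const,
      intervalIntegral.integral_const, smul_eq_mul]
    ring
  have hg : g =o[𝓝 t₀] fun t => b t - b t₀ := by
    refine isLittleO_iff.2 fun ε hε => ?_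
    obtain ⟨δ, hδ, hFδ⟩ := Metric.continuousAt_iff.1 hF.continuousAt ε hε
    filter_upwards [Metric.ball_mem_nhds t₀ hδ,
      hb.continuousAt.tendsto (Metric.ball_mem_nhds (b t₀) hδ)] with t ht hbt
    refine intervalIntegral.norm_integral_le_of_norm_le_const fun z hz => ?_
    have hzδ : dist (t, z) (t₀, b t₀) < δ :=
      max_lt ht ((abs_sub_left_of_mem_uIcc (uIoc_subset_uIcc hz)).trans_lt hbt)
    exact (hFδ hzδ).le
  have hg' : HasDerivAt g 0 t₀ := by
    rw [hasDerivAt_iff_isLittleO]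
    simpa [g] using hg.trans_isBigO hb.isBigO_sub
  rw [hsplit]
  simpa using ((hb.sub_const (b t₀)).mul_const (F t₀ (b t₀))).fun_add hg'

theorem hasDerivAt_integral_leibniz (hF : ContDiff ℝ 1 (uncurry F)) {b : ℝ → ℝ} {b' t₀ : ℝ}
    (hb : HasDerivAt b b' t₀) (c : ℝ) :
    HasDerivAt (fun t => ∫ z in c..b t, F t z)
      ((∫ z in c..b t₀, partialFst F t₀ z) + b' * F t₀ (b t₀)) t₀ := by
  have hFi (t : ℝ) : ∀ x y, IntervalIntegrable (F t) volume x y :=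
    (hF.continuous.uncurry_left t).intervalIntegrable
  have hsplit : (fun t => ∫ z in c..b t, F t z)
      = fun t => (∫ z in c..b t₀, F t z) + ∫ z in b t₀..b t, F t z :=
    funext fun t => (integral_add_adjacent_intervals (hFi t _ _) (hFi t _ _)).symm
  rw [hsplit]
  exact (hasDerivAt_integral_of_contDiff hF c (b t₀) t₀).add
    (hasDerivAt_integral_upper_of_continuous hF.continuous hb)

end Leibniz

section Energy

variable {u : ℝ → ℝ → ℝ} {msq : ℝ}

noncomputable def energyDensity (u : ℝ → ℝ → ℝ) (msq t z : ℝ) : ℝ :=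
  partialFst u t z ^ 2 + partialSnd u t z ^ 2 + msq * u t z ^ 2

theorem energyDensity_nonneg (hmsq : 0 ≤ msq) (t z : ℝ) : 0 ≤ energyDensity u msq t z := by
  unfold energyDensity
  positivity

theorem ContDiff.uncurry_energyDensity {m n : WithTop ℕ∞} (hu : ContDiff ℝ m (uncurry u))
    (hmn : n + 1 ≤ m) : ContDiff ℝ n (uncurry (energyDensity u msq)) :=
  (((hu.uncurry_partialFst hmn).pow 2).add ((hu.uncurry_partialSnd hmn).pow 2)).add
    (contDiff_const.mul ((hu.of_le (le_self_add.trans hmn)).pow 2))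

theorem partialFst_energyDensity (hu : ContDiff ℝ 2 (uncurry u)) (t z : ℝ) :
    partialFst (energyDensity u msq) t z
      = 2 * partialFst u t z * (partialFst (partialFst u) t z + msq * u t z)
        + 2 * partialSnd u t z * partialFst (partialSnd u) t z := by
  have hu₁ := hu.differentiable two_ne_zero
  have hfst := (hu.uncurry_partialFst (n := 1) le_rfl).differentiable one_ne_zero
  have hsnd := (hu.uncurry_partialSnd (n := 1) le_rfl).differentiable one_ne_zero
  have h : HasDerivAt (fun s => energyDensity u msq s z) _ t :=
    (((hasDerivAt_partialFst hfst t z).pow 2).add ((hasDerivAt_partialFst hsnd t z).pow 2)).add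
      (((hasDerivAt_partialFst hu₁ t z).pow 2).const_mul msq)
  rw [partialFst, h.deriv]
  ring

theorem hasDerivAt_energyFlux (hu : ContDiff ℝ 2 (uncurry u)) (t z : ℝ) :
    HasDerivAt (fun y => 2 * partialFst u t y * partialSnd u t y)
      (2 * partialFst u t z * partialSnd (partialSnd u) t z
        + 2 * partialSnd u t z * partialFst (partialSnd u) t z) z := by
  have hfst := (hu.uncurry_partialFst (n := 1) le_rfl).differentiable one_ne_zero
  have hsnd := (hu.uncurry_partialSnd (n := 1) le_rfl).differentiable one_ne_zero
  refine (((hasDerivAt_partialSnd hfst t z).const_mul 2).mul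
    (hasDerivAt_partialSnd hsnd t z)).congr_deriv ?_
  rw [partialSnd_partialFst hu]
  ring

theorem integral_partialFst_energyDensity (hu : ContDiff ℝ 2 (uncurry u)) {t c d : ℝ}
    (hwave : ∀ z ∈ uIcc c d, partialFst (partialFst u) t z - partialSnd (partialSnd u) t z
      + msq * u t z = 0) :
    ∫ z in c..d, partialFst (energyDensity u msq) t z
      = 2 * partialFst u t d * partialSnd u t d - 2 * partialFst u t c * partialSnd u t c := by
  have hcont : Continuous (uncurry (partialFst (energyDensity u msq))) :=
    ((hu.uncurry_energyDensity (n := 1) le_rfl).uncurry_partialFst (n := 0)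
      (by norm_num)).continuous
  refine integral_eq_sub_of_hasDerivAt (fun z hz => (hasDerivAt_energyFlux hu t z).congr_deriv ?_)
    ((hcont.uncurry_left t).intervalIntegrable _ _)
  rw [partialFst_energyDensity hu]
  linear_combination (-2 * partialFst u t z) * hwave z hz

end Energy

section RobinEnergy

variable {u : ℝ → ℝ → ℝ} {msq κ a : ℝ}

-- `κ` stands for `cot α`; the Robin condition then reads `∂_z u(t, 0) = -κ u(t, 0)`.
noncomputable def robinEnergy (u : ℝ → ℝ → ℝ) (msq κ a t : ℝ) : ℝ :=
  1 / 2 * (∫ z in (0:ℝ)..(a - t), energyDensity u msq t z) - 1 / 2 * κ * u t 0 ^ 2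

theorem hasDerivAt_robinEnergy (hu : ContDiff ℝ 2 (uncurry u)) (t : ℝ) :
    HasDerivAt (robinEnergy u msq κ a)
      (1 / 2 * ((∫ z in (0:ℝ)..(a - t), partialFst (energyDensity u msq) t z)
        - energyDensity u msq t (a - t)) - κ * u t 0 * partialFst u t 0) t := by
  have hleibniz := hasDerivAt_integral_leibniz (hu.uncurry_energyDensity (msq := msq) le_rfl)
    ((hasDerivAt_id' t).const_sub a) 0
  refine ((hleibniz.const_mul (1 / 2)).sub
    (((hasDerivAt_partialFst (hu.differentiable two_ne_zero) t 0).pow 2).const_mul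
      (1 / 2 * κ))).congr_deriv ?_
  ring

theorem hasDerivAt_robinEnergy_of_wave (hu : ContDiff ℝ 2 (uncurry u)) {t : ℝ} (ht : t ≤ a)
    (hwave : ∀ z ∈ Icc 0 (a - t), partialFst (partialFst u) t z - partialSnd (partialSnd u) t z
      + msq * u t z = 0)
    (hrobin : partialSnd u t 0 = -κ * u t 0) :
    HasDerivAt (robinEnergy u msq κ a)
      (-(1 / 2) * ((partialFst u t (a - t) - partialSnd u t (a - t)) ^ 2
        + msq * u t (a - t) ^ 2)) t := by
  refine (hasDerivAt_robinEnergy hu t).congr_deriv ?_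
  rw [integral_partialFst_energyDensity hu (by rwa [uIcc_of_le (sub_nonneg.2 ht)]), hrobin,
    energyDensity]
  ring

theorem antitoneOn_robinEnergy (hmsq : 0 ≤ msq) (hu : ContDiff ℝ 2 (uncurry u))
    (hwave : ∀ t z : ℝ, 0 ≤ t → t ≤ a → 0 ≤ z → z ≤ a - t →
      partialFst (partialFst u) t z - partialSnd (partialSnd u) t z + msq * u t z = 0)
    (hrobin : ∀ t ∈ Icc 0 a, partialSnd u t 0 = -κ * u t 0) :
    AntitoneOn (robinEnergy u msq κ a) (Icc 0 a) := by
  refine antitoneOn_of_hasDerivWithinAt_nonpos (convex_Icc 0 a) (f' := fun t =>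
      -(1 / 2) * ((partialFst u t (a - t) - partialSnd u t (a - t)) ^ 2 + msq * u t (a - t) ^ 2))
    (fun t _ => (hasDerivAt_robinEnergy hu t).continuousAt.continuousWithinAt)
    (fun t ht => ?_) (fun t _ => ?_)
  · rw [interior_Icc] at ht
    exact (hasDerivAt_robinEnergy_of_wave hu ht.2.le
      (fun z hz => hwave t z ht.1.le ht.2.le hz.1 hz.2) (hrobin t (Ioo_subset_Icc_self ht)))
      |>.hasDerivWithinAt
  · exact mul_nonpos_of_nonpos_of_nonneg (by norm_num) (by positivity)

theorem robinEnergy_nonneg (hmsq : 0 ≤ msq) (hκ : κ ≤ 0) {t : ℝ} (ht : t ≤ a) :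
    0 ≤ robinEnergy u msq κ a t := by
  have hint : 0 ≤ ∫ z in (0:ℝ)..(a - t), energyDensity u msq t z :=
    integral_nonneg (sub_nonneg.2 ht) fun z _ => energyDensity_nonneg hmsq t z
  unfold robinEnergy
  nlinarith [mul_nonneg (neg_nonneg.2 hκ) (sq_nonneg (u t 0))]

theorem robinEnergy_zero_eq_zero (ha : 0 < a) (hu : Differentiable ℝ (uncurry u))
    (h0 : ∀ z ∈ Icc 0 a, u 0 z = 0 ∧ partialFst u 0 z = 0) :
    robinEnergy u msq κ a 0 = 0 := by
  have hdensity : ∀ z ∈ uIcc 0 (a - 0), energyDensity u msq 0 z = 0 := by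
    intro z hz
    rw [sub_zero, uIcc_of_le ha.le] at hz
    have hsnd : partialSnd u 0 z = 0 :=
      (uniqueDiffOn_Icc ha z hz).eq_deriv _ (hasDerivAt_partialSnd hu 0 z).hasDerivWithinAt
        ((hasDerivWithinAt_const z _ 0).congr (fun y hy => (h0 y hy).1) (h0 z hz).1)
    simp [energyDensity, (h0 z hz).1, (h0 z hz).2, hsnd]
  rw [robinEnergy, integral_congr hdensity, (h0 0 (left_mem_Icc.2 ha.le)).1]
  simp

theorem partialFst_eq_zero_of_robinEnergy_eq_zero (hmsq : 0 ≤ msq) (hκ : κ ≤ 0)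
    (hu : ContDiff ℝ 1 (uncurry u)) {s : ℝ} (hs : s < a) (hE : robinEnergy u msq κ a s = 0)
    {z : ℝ} (hz : z ∈ Icc 0 (a - s)) : partialFst u s z = 0 := by
  have hint : 0 ≤ ∫ y in (0:ℝ)..(a - s), energyDensity u msq s y :=
    integral_nonneg (by linarith) fun y _ => energyDensity_nonneg hmsq s y
  have hint0 : ∫ y in (0:ℝ)..(a - s), energyDensity u msq s y = 0 := by
    unfold robinEnergy at hE
    nlinarith [mul_nonneg (neg_nonneg.2 hκ) (sq_nonneg (u s 0))]
  by_contra hne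
  have hpos : 0 < energyDensity u msq s z := by
    unfold energyDensity
    positivity
  refine (integral_pos (by linarith) ?_ (fun y _ => energyDensity_nonneg hmsq s y)
    ⟨z, hz, hpos⟩).ne' hint0
  exact ((hu.uncurry_energyDensity (n := 0) (by norm_num)).continuous.uncurry_left s).continuousOn

theorem eq_zero_of_initial_data_eq_zero (ha : 0 < a) (hmsq : 0 ≤ msq) (hκ : κ ≤ 0)
    (hu : ContDiff ℝ 2 (uncurry u))
    (hwave : ∀ t z : ℝ, 0 ≤ t → t ≤ a → 0 ≤ z → z ≤ a - t →
      partialFst (partialFst u) t z - partialSnd (partialSnd u) t z + msq * u t z = 0)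
    (hrobin : ∀ t ∈ Icc 0 a, partialSnd u t 0 = -κ * u t 0)
    (h0 : ∀ z ∈ Icc 0 a, u 0 z = 0 ∧ partialFst u 0 z = 0) {t z : ℝ} (ht : 0 ≤ t)
    (hz : 0 ≤ z) (hzt : z ≤ a - t) : u t z = 0 := by
  have hu₁ := hu.differentiable two_ne_zero
  have hE : ∀ s ∈ Icc 0 a, robinEnergy u msq κ a s = 0 := fun s hs =>
    le_antisymm
      ((antitoneOn_robinEnergy hmsq hu hwave hrobin (left_mem_Icc.2 ha.le) hs hs.1).trans_eq
        (robinEnergy_zero_eq_zero ha hu₁ h0))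
      (robinEnergy_nonneg hmsq hκ hs.2)
  have hconst := constant_of_has_deriv_right_zero (f := fun s => u s z) (a := 0) (b := t)
    (fun s _ => (hasDerivAt_partialFst hu₁ s z).continuousAt.continuousWithinAt)
    (fun s hs => by
      have hsa : s < a := by linarith [hs.2]
      rw [← partialFst_eq_zero_of_robinEnergy_eq_zero hmsq hκ (hu.of_le one_le_two) hsa
        (hE s ⟨hs.1, hsa.le⟩) ⟨hz, by linarith [hs.2]⟩]
      exact (hasDerivAt_partialFst hu₁ s z).hasDerivWithinAt)
  rw [hconst t (right_mem_Icc.2 ht)]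
  exact (h0 z ⟨hz, by linarith⟩).1

end RobinEnergy

/-- Energy decay and uniqueness on the left half-diamond with a Robin boundary
condition at `z = 0`, for `π/2 ≤ α < π`. -/
theorem stmt4 (u : ℝ → ℝ → ℝ) (a msq α : ℝ) (ha : 0 < a) (hmsq : 0 ≤ msq)
    (hα₁ : Real.pi / 2 ≤ α) (hα₂ : α < Real.pi)
    (hu : ContDiff ℝ 2 (fun p : ℝ × ℝ => u p.1 p.2))
    (hPDE : ∀ t z : ℝ, 0 ≤ t → t ≤ a → 0 ≤ z → z ≤ a - t →
      deriv (fun s => deriv (fun s' => u s' z) s) t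
        - deriv (deriv (u t)) z + msq * u t z = 0)
    (hRobin : ∀ t ∈ Icc (0:ℝ) a,
      Real.cos α * u t 0 + Real.sin α * deriv (u t) 0 = 0) :
    ∀ ε : ℝ → ℝ,
      (ε = fun t =>
        (1/2) * (∫ z in (0:ℝ)..(a - t),
          ((deriv (fun s => u s z) t)^2 + (deriv (u t) z)^2 + msq * (u t z)^2))
        - (1/2) * (Real.cos α / Real.sin α) * (u t 0)^2) →
      (∀ t ∈ Icc (0:ℝ) a, 0 ≤ ε t) ∧
      AntitoneOn ε (Icc (0:ℝ) a) ∧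
      ((∀ z ∈ Icc (0:ℝ) a, u 0 z = 0 ∧ deriv (fun s => u s z) 0 = 0) →
        ∀ t z : ℝ, 0 ≤ t → t ≤ a → 0 ≤ z → z ≤ a - t → u t z = 0) := by
  intro ε hε
  have hsin : 0 < sin α := sin_pos_of_pos_of_lt_pi (by linarith [pi_pos]) hα₂
  have hκ : cos α / sin α ≤ 0 :=
    div_nonpos_of_nonpos_of_nonneg (cos_nonpos_of_pi_div_two_le_of_le hα₁ (by linarith)) hsin.le
  have hrobin : ∀ t ∈ Icc (0:ℝ) a, partialSnd u t 0 = -(cos α / sin α) * u t 0 := fun t ht => by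
    rw [partialSnd]
    field_simp
    linear_combination hRobin t ht
  obtain rfl : ε = robinEnergy u msq (cos α / sin α) a := hε
  exact ⟨fun t ht => robinEnergy_nonneg hmsq hκ ht.2,
    antitoneOn_robinEnergy hmsq hu hPDE hrobin,
    fun h0 t z ht _ hz hzt => eq_zero_of_initial_data_eq_zero ha hmsq hκ hu hPDE hrobin h0 ht hz hzt⟩
end

section
/- Let A be a self-adjoint operator with A ≥ ω₁² > 0 and let f : ℝ → D(A) be twice continuously differentiable with compact support (in the graph norm of A). Then u(t) = ∫_t^∞ (sin(√A (t'-t))/√A) f(t') dt' is twice continuously differentiable, takes values in D(A), satisfies u''(t) + A u(t) = f(t) for all t, and u(t) = 0 for t larger than the supremum of the support of f. -/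
open MeasureTheory Set Filter Topology

/-!
Write `S(s) = sin(√A s)/√A` and `C(s) = cos(√A s)`. Uniform second-order Taylor bounds on the
spectrum show, through the functional calculus, that `S' = C` and `C' = -A S`, with `S 0 = 0` and
`C 0 = 1`. The retarded integral `u(t) = ∫_{t' ≥ t} S(t' - t) f(t') dt'` is the convolution of `f`
with the locally integrable kernel `τ ↦ 1_{τ ≤ 0} S(-τ)`, hence as smooth as `f`, with
`u'' = ∫_{t' ≥ t} S(t' - t) f''(t') dt'`. Finally `S(t' - t) f''(t') + A S(t' - t) f(t')` is the
`t'`-derivative of `S(t' - t) f'(t') - C(t' - t) f(t')`, which has compact support and equals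
`-f(t)` at `t' = t`.
-/

theorem abs_sub_sub_mul_le_of_hasDerivAt {φ φ' φ'' : ℝ → ℝ} {K : ℝ}
    (hφ : ∀ t, HasDerivAt φ (φ' t) t) (hφ' : ∀ t, HasDerivAt φ' (φ'' t) t)
    (hK : ∀ t, |φ'' t| ≤ K) (u v : ℝ) :
    |φ v - φ u - (v - u) * φ' u| ≤ K * (v - u) ^ 2 := by
  have hlip : ∀ t, |φ' t - φ' u| ≤ K * |t - u| := fun t =>
    convex_univ.norm_image_sub_le_of_norm_hasDerivWithin_le
      (fun x _ => (hφ' x).hasDerivWithinAt) (fun x _ => hK x) (mem_univ u) (mem_univ t)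
  have hrem : ∀ t, HasDerivAt (fun t => φ t - t * φ' u) (φ' t - φ' u) t := fun t =>
    ((hφ t).sub ((hasDerivAt_id' t).mul_const (φ' u))).congr_deriv (by rw [one_mul])
  have hmvt := (convex_uIcc u v).norm_image_sub_le_of_norm_hasDerivWithin_le
    (fun t _ => (hrem t).hasDerivWithinAt)
    (fun t ht => (hlip t).trans (mul_le_mul_of_nonneg_left (abs_sub_left_of_mem_uIcc ht)
      ((abs_nonneg _).trans (hK 0)))) left_mem_uIcc right_mem_uIcc
  calc |φ v - φ u - (v - u) * φ' u| = ‖(φ v - v * φ' u) - (φ u - u * φ' u)‖ := by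
        rw [Real.norm_eq_abs]; ring_nf
    _ ≤ K * |v - u| * ‖v - u‖ := hmvt
    _ = K * (v - u) ^ 2 := by rw [Real.norm_eq_abs, mul_assoc, ← sq, sq_abs]

theorem abs_sin_mul_div_sub_le {a : ℝ} (ha : 0 < a) (s v : ℝ) :
    |Real.sin (a * v) / a - Real.sin (a * s) / a - (v - s) * Real.cos (a * s)| ≤
      a * (v - s) ^ 2 := by
  refine abs_sub_sub_mul_le_of_hasDerivAt (φ := fun t => Real.sin (a * t) / a)
    (φ' := fun t => Real.cos (a * t)) (φ'' := fun t => -(a * Real.sin (a * t)))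
    (fun t => ?_) (fun t => ?_) (fun t => ?_) s v
  · simpa [ha.ne'] using ((hasDerivAt_id t).const_mul a).sin.div_const a
  · simpa [mul_comm] using ((hasDerivAt_id t).const_mul a).cos
  · rw [abs_neg, abs_mul, abs_of_pos ha]
    exact mul_le_of_le_one_right ha.le (Real.abs_sin_le_one _)

theorem abs_cos_mul_sub_le (a s v : ℝ) :
    |Real.cos (a * v) - Real.cos (a * s) - (v - s) * -(a * Real.sin (a * s))| ≤
      a ^ 2 * (v - s) ^ 2 := by
  refine abs_sub_sub_mul_le_of_hasDerivAt (φ := fun t => Real.cos (a * t))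
    (φ' := fun t => -(a * Real.sin (a * t))) (φ'' := fun t => -(a * (a * Real.cos (a * t))))
    (fun t => ?_) (fun t => ?_) (fun t => ?_) s v
  · simpa [mul_comm] using ((hasDerivAt_id t).const_mul a).cos
  · exact (((hasDerivAt_id' t).const_mul a).sin.const_mul a).fun_neg.congr_deriv (by ring)
  · rw [abs_neg, ← mul_assoc, ← sq, abs_mul, abs_of_nonneg (sq_nonneg a)]
    exact mul_le_of_le_one_right (sq_nonneg a) (Real.abs_cos_le_one _)

section CFC
variable {𝒜 : Type*} [CStarAlgebra 𝒜]

theorem hasDerivAt_cfc_of_abs_sub_sub_le {g g' : ℝ → ℝ → ℝ} {a : 𝒜} {s K : ℝ} (hK : 0 ≤ K)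
    (hg : ∀ v, ContinuousOn (g v) (spectrum ℝ a)) (hg' : ContinuousOn (g' s) (spectrum ℝ a))
    (h : ∀ x ∈ spectrum ℝ a, ∀ v, |g v x - g s x - (v - s) * g' s x| ≤ K * (v - s) ^ 2) :
    HasDerivAt (fun v => cfc (g v) a) (cfc (g' s) a) s := by
  rw [hasDerivAt_iff_isLittleO]
  refine Asymptotics.IsBigO.trans_isLittleO (.of_bound K (Eventually.of_forall fun v => ?_))
    (Asymptotics.isLittleO_pow_sub_sub s one_lt_two)
  have hsplit : cfc (g v) a - cfc (g s) a - (v - s) • cfc (g' s) a =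
      cfc (fun x => g v x - g s x - (v - s) * g' s x) a := by
    rw [cfc_sub (fun x => g v x - g s x) (fun x => (v - s) * g' s x) a ((hg v).sub (hg s))
      (hg'.const_smul (v - s)), cfc_sub (g v) (g s) a, cfc_const_mul (v - s) (g' s) a]
  rw [hsplit, norm_pow, norm_norm, Real.norm_eq_abs, sq_abs]
  exact norm_cfc_le (by positivity) fun x hx => h x hx v

theorem le_norm_mul_norm_one_of_mem_spectrum {a : 𝒜} {x : ℝ} (hx : x ∈ spectrum ℝ a) :
    x ≤ ‖a‖ * ‖(1 : 𝒜)‖ :=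
  (le_abs_self x).trans (by simpa using spectrum.subset_closedBall_norm_mul a hx)

noncomputable def sinSqrtDivSqrt (a : 𝒜) (s : ℝ) : 𝒜 :=
  cfc (fun x : ℝ => Real.sin (Real.sqrt x * s) / Real.sqrt x) a

noncomputable def cosSqrt (a : 𝒜) (s : ℝ) : 𝒜 :=
  cfc (fun x : ℝ => Real.cos (Real.sqrt x * s)) a

variable {a : 𝒜}

@[simp]
theorem sinSqrtDivSqrt_zero : sinSqrtDivSqrt a 0 = 0 := by
  simp [sinSqrtDivSqrt]

@[simp]
theorem cosSqrt_zero (ha : IsSelfAdjoint a) : cosSqrt a 0 = 1 := by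
  simp [cosSqrt, cfc_const_one ℝ a ha]

theorem hasDerivAt_sinSqrtDivSqrt (hpos : ∀ x ∈ spectrum ℝ a, 0 < x) (s : ℝ) :
    HasDerivAt (sinSqrtDivSqrt a) (cosSqrt a s) s := by
  refine hasDerivAt_cfc_of_abs_sub_sub_le
    (g := fun v x => Real.sin (Real.sqrt x * v) / Real.sqrt x)
    (g' := fun v x => Real.cos (Real.sqrt x * v)) (Real.sqrt_nonneg (‖a‖ * ‖(1 : 𝒜)‖))
    (fun v => ?_) (by fun_prop) fun x hx v => ?_
  · exact ContinuousOn.div (by fun_prop) (by fun_prop)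
      fun x hx => (Real.sqrt_pos.2 (hpos x hx)).ne'
  · exact (abs_sin_mul_div_sub_le (Real.sqrt_pos.2 (hpos x hx)) s v).trans
      (by gcongr; exact le_norm_mul_norm_one_of_mem_spectrum hx)

theorem hasDerivAt_cosSqrt_cfc (s : ℝ) :
    HasDerivAt (cosSqrt a)
      (cfc (fun x : ℝ => -(Real.sqrt x * Real.sin (Real.sqrt x * s))) a) s := by
  refine hasDerivAt_cfc_of_abs_sub_sub_le (g := fun v x => Real.cos (Real.sqrt x * v))
    (g' := fun v x => -(Real.sqrt x * Real.sin (Real.sqrt x * v)))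
    (by positivity : 0 ≤ ‖a‖ * ‖(1 : 𝒜)‖)
    (fun v => by fun_prop) (by fun_prop) fun x hx v => ?_
  refine (abs_cos_mul_sub_le (Real.sqrt x) s v).trans ?_
  gcongr
  rw [Real.sq_sqrt']
  exact max_le (le_norm_mul_norm_one_of_mem_spectrum hx) (by positivity)

theorem mul_sinSqrtDivSqrt (ha : IsSelfAdjoint a) (hpos : ∀ x ∈ spectrum ℝ a, 0 < x) (s : ℝ) :
    a * sinSqrtDivSqrt a s = cfc (fun x : ℝ => Real.sqrt x * Real.sin (Real.sqrt x * s)) a := by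
  have hsqrt : ∀ x ∈ spectrum ℝ a, Real.sqrt x ≠ 0 := fun x hx => (Real.sqrt_pos.2 (hpos x hx)).ne'
  nth_rw 1 [← cfc_id' ℝ a ha]
  rw [sinSqrtDivSqrt, ← cfc_mul (fun x : ℝ => x)
    (fun x : ℝ => Real.sin (Real.sqrt x * s) / Real.sqrt x) a (by fun_prop)
    (ContinuousOn.div (by fun_prop) (by fun_prop) hsqrt)]
  refine cfc_congr fun x hx => ?_
  rw [mul_div_assoc', div_eq_iff (hsqrt x hx), mul_assoc, mul_comm _ (Real.sqrt x), ← mul_assoc,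
    Real.mul_self_sqrt (hpos x hx).le]

theorem hasDerivAt_cosSqrt (ha : IsSelfAdjoint a) (hpos : ∀ x ∈ spectrum ℝ a, 0 < x) (s : ℝ) :
    HasDerivAt (cosSqrt a) (-(a * sinSqrtDivSqrt a s)) s := by
  rw [mul_sinSqrtDivSqrt ha hpos, ← cfc_neg]
  exact hasDerivAt_cosSqrt_cfc s

end CFC

section Retarded
variable {E : Type*} [NormedAddCommGroup E] [NormedSpace ℝ E]

noncomputable def retardedIntegral (S : ℝ → E →L[ℝ] E) (φ : ℝ → E) (t : ℝ) : E :=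
  ∫ t' in Ici t, S (t' - t) (φ t')

variable {S C : ℝ → E →L[ℝ] E} {φ ψ : ℝ → E}

open scoped Convolution in
theorem retardedIntegral_eq_convolution (S : ℝ → E →L[ℝ] E) (φ : ℝ → E) :
    retardedIntegral S φ =
      (Iic 0).indicator (fun τ => S (-τ)) ⋆[ContinuousLinearMap.id ℝ (E →L[ℝ] E)] φ := by
  funext t
  rw [convolution_eq_swap, retardedIntegral, ← integral_indicator measurableSet_Ici]
  congr 1 with t'
  by_cases ht' : t ≤ t' <;> simp [indicator, ht']

theorem ContDiff.retardedIntegral {n : ℕ∞} (hS : Continuous S) (hφ : ContDiff ℝ n φ)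
    (hφs : HasCompactSupport φ) : ContDiff ℝ n (retardedIntegral S φ) := by
  rw [retardedIntegral_eq_convolution]
  exact hφs.contDiff_convolution_right _
    ((hS.comp continuous_neg).locallyIntegrable.indicator measurableSet_Iic) hφ

theorem deriv_retardedIntegral (hS : Continuous S) (hφ : ContDiff ℝ 1 φ)
    (hφs : HasCompactSupport φ) : deriv (retardedIntegral S φ) = retardedIntegral S (deriv φ) := by
  funext t
  rw [retardedIntegral_eq_convolution, retardedIntegral_eq_convolution]
  exact (hφs.hasDerivAt_convolution_right _
    ((hS.comp continuous_neg).locallyIntegrable.indicator measurableSet_Iic) hφ t).deriv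

theorem retardedIntegral_eq_zero {t : ℝ} (hφ : ∀ t' ≥ t, φ t' = 0) : retardedIntegral S φ t = 0 :=
  setIntegral_eq_zero_of_forall_eq_zero fun t' ht' => by rw [hφ t' ht', map_zero]

theorem HasCompactSupport.apply_left (T : ℝ → E →L[ℝ] E) (hψs : HasCompactSupport ψ) :
    HasCompactSupport fun t => T t (ψ t) :=
  hψs.mono fun t ht h0 => ht (by simp [h0])

theorem integrable_apply_sub (hS : Continuous S) (hψ : Continuous ψ) (hψs : HasCompactSupport ψ)
    (t : ℝ) : Integrable (fun t' => S (t' - t) (ψ t')) :=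
  ((hS.comp (continuous_sub_right t)).clm_apply hψ).integrable_of_hasCompactSupport
    (hψs.apply_left _)

theorem retardedIntegral_deriv_deriv_add_apply [CompleteSpace E] {B : E →L[ℝ] E}
    (hS : ∀ s, HasDerivAt S (C s) s) (hC : ∀ s, HasDerivAt C (-(B ∘L S s)) s)
    (hS0 : S 0 = 0) (hC0 : C 0 = 1) (hφ : ContDiff ℝ 2 φ) (hφs : HasCompactSupport φ) (t : ℝ) :
    retardedIntegral S (deriv (deriv φ)) t + B (retardedIntegral S φ t) = φ t := by
  have hφ1 : ContDiff ℝ 1 (deriv φ) := hφ.deriv'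
  have hdφ : ∀ x, HasDerivAt φ (deriv φ x) x := fun x =>
    (hφ.differentiable (by norm_num) x).hasDerivAt
  have hdφ1 : ∀ x, HasDerivAt (deriv φ) (deriv (deriv φ) x) x := fun x =>
    (hφ1.differentiable (by norm_num) x).hasDerivAt
  have hSc : Continuous S := continuous_iff_continuousAt.2 fun s => (hS s).continuousAt
  set G : ℝ → E := fun t' => S (t' - t) (deriv φ t') - C (t' - t) (φ t')
  have hG : ∀ t', HasDerivAt G (S (t' - t) (deriv (deriv φ) t') + B (S (t' - t) (φ t'))) t' := by
    intro t'
    have h1 := ((hS (t' - t)).comp_sub_const t' t).clm_apply (hdφ1 t')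
    have h2 := ((hC (t' - t)).comp_sub_const t' t).clm_apply (hdφ t')
    refine (h1.fun_sub h2).congr_deriv ?_
    simp only [neg_apply, ContinuousLinearMap.comp_apply]
    abel
  have hGlim : Tendsto G atTop (𝓝 0) :=
    ((hφs.deriv.apply_left _).sub (hφs.apply_left _)).is_zero_at_infty.mono_left
      atTop_le_cocompact
  have hint₂ := integrable_apply_sub hSc hφ.continuous hφs t
  have hint₁ := integrable_apply_sub hSc (hφ1.continuous_deriv le_rfl) hφs.deriv.deriv t
  calc retardedIntegral S (deriv (deriv φ)) t + B (retardedIntegral S φ t)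
      = ∫ t' in Ioi t, S (t' - t) (deriv (deriv φ) t') + B (S (t' - t) (φ t')) := by
        rw [retardedIntegral, retardedIntegral, ← B.integral_comp_comm hint₂.restrict,
          ← integral_add hint₁.restrict (B.integrable_comp hint₂).restrict,
          integral_Ici_eq_integral_Ioi]
    _ = 0 - G t := integral_Ioi_of_hasDerivAt_of_tendsto' (fun t' _ => hG t')
        (hint₁.add (B.integrable_comp hint₂)).integrableOn hGlim
    _ = φ t := by simp [G, hS0, hC0]

end Retarded

theorem le_of_mem_spectrum_of_isPositive_sub_smul_one {H : Type*} [NormedAddCommGroup H]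
    [InnerProductSpace ℂ H] [CompleteSpace H] {A : H →L[ℂ] H} (hA : IsSelfAdjoint A) {c x : ℝ}
    (hc : (A - (c : ℂ) • (1 : H →L[ℂ] H)).IsPositive) (hx : x ∈ spectrum ℝ A) : c ≤ x := by
  have hle : algebraMap ℝ (H →L[ℂ] H) c ≤ A := by
    rw [← sub_nonneg, ContinuousLinearMap.nonneg_iff_isPositive, Algebra.algebraMap_eq_smul_one]
    exact_mod_cast hc
  exact (algebraMap_le_iff_le_spectrum hA).1 hle x hx

/-- The retarded solution `u(t) = ∫_t^∞ (sin(√A(t'-t))/√A) f(t') dt'` of the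
inhomogeneous abstract Klein–Gordon equation: it is C², solves `u'' + A u = f`,
and vanishes for `t` beyond the support of `f`. -/
theorem stmt9 {H : Type*} [NormedAddCommGroup H] [InnerProductSpace ℂ H]
    [CompleteSpace H] (A : H →L[ℂ] H) (hA : IsSelfAdjoint A) (ω₁ : ℝ)
    (hω₁ : 0 < ω₁) (hpos : (A - ((ω₁ : ℂ)^2) • (1 : H →L[ℂ] H)).IsPositive)
    (f : ℝ → H) (hf : ContDiff ℝ 2 f) (hsupp : HasCompactSupport f) :
    ∀ u : ℝ → H,
      (u = fun t => ∫ t' in Ici t,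
        (cfc (fun x : ℝ => Real.sin (Real.sqrt x * (t' - t)) / Real.sqrt x) A) (f t')) →
      ContDiff ℝ 2 u ∧
      (∀ t : ℝ, deriv (deriv u) t + A (u t) = f t) ∧
      (∀ t : ℝ, (∀ s, f s ≠ 0 → s < t) → u t = 0) := by
  intro u hu
  have hspec : ∀ x ∈ spectrum ℝ A, 0 < x := fun x hx =>
    (pow_pos hω₁ 2).trans_le (le_of_mem_spectrum_of_isPositive_sub_smul_one hA
      (by exact_mod_cast hpos) hx)
  let R := ContinuousLinearMap.restrictScalarsL ℂ H H ℝ ℝ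
  let S : ℝ → H →L[ℝ] H := fun s => R (sinSqrtDivSqrt A s)
  have hS : ∀ s, HasDerivAt S (R (cosSqrt A s)) s := fun s =>
    R.hasFDerivAt.comp_hasDerivAt s (hasDerivAt_sinSqrtDivSqrt hspec s)
  have hC : ∀ s, HasDerivAt (fun s => R (cosSqrt A s)) (-(R A ∘L S s)) s := fun s =>
    R.hasFDerivAt.comp_hasDerivAt s (hasDerivAt_cosSqrt hA hspec s)
  have hSc : Continuous S := continuous_iff_continuousAt.2 fun s => (hS s).continuousAt
  have hu : u = retardedIntegral S f := hu
  have hu'' : deriv (deriv u) = retardedIntegral S (deriv (deriv f)) := by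
    rw [hu, deriv_retardedIntegral hSc (hf.of_le one_le_two) hsupp,
      deriv_retardedIntegral hSc hf.deriv' hsupp.deriv]
  refine ⟨hu ▸ hf.retardedIntegral hSc hsupp, fun t => ?_, fun t ht => ?_⟩
  · rw [hu'', hu]
    exact retardedIntegral_deriv_deriv_add_apply hS hC (by simp [S])
      (by simp [R, cosSqrt_zero hA]; rfl) hf hsupp t
  · rw [hu]
    exact retardedIntegral_eq_zero fun t' ht' => not_not.1 fun h => (ht t' h).not_ge ht'
end

section
/- Consider the Sturm–Liouville eigenvalue problem -φ'' + m²φ = ω²φ on (0,ℓ) with φ(0) = 0 and the λ-dependent boundary condition -(β₁ φ(ℓ) - β₂ φ'(ℓ)) = ω²(β₁' φ(ℓ) - β₂' φ'(ℓ)). Suppose ρ := β₁'β₂ - β₁β₂' > 0, m² ≥ 0, β₂' > 0, β₁ ≥ 0, β₂ < 0, β₁' < 0. If φ is a nonzero solution with eigenvalue λ = ω², then λ > 0. -/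
/-!
Multiplying the equation by `φ` and integrating by parts gives
`λ ∫ φ² = ∫ (φ'² + m² φ²) - φ(ℓ) φ'(ℓ)`. Multiplying this by `ρ` and adding the boundary condition
times `β₁' φ(ℓ) - β₂' φ'(ℓ)` yields
`λ (ρ ∫ φ² + (β₁' φ(ℓ) - β₂' φ'(ℓ))²) = ρ ∫ (φ'² + m² φ²) + Q(φ(ℓ), φ'(ℓ))`,
the quadratic form of the self-adjoint realisation on `L²(0, ℓ) ⊕ ℂ`, where the boundary form `Q`
is positive semidefinite under the sign conditions. Since `φ(0) = 0` and `φ ≢ 0`, `∫ φ'² > 0`, so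
the right-hand side is positive while the factor of `λ` is nonnegative.
-/

open Set MeasureTheory intervalIntegral

theorem integral_sq_pos_of_continuousOn {g : ℝ → ℝ} {a b c : ℝ} (hab : a < b)
    (hg : ContinuousOn g (Icc a b)) (hc : c ∈ Icc a b) (hgc : g c ≠ 0) :
    0 < ∫ x in a..b, g x ^ 2 := by
  have h := integral_lt_integral_of_continuousOn_of_le_of_exists_lt hab continuousOn_const
    (hg.pow 2) (fun x _ => sq_nonneg (g x)) ⟨c, hc, by simpa using sq_pos_of_ne_zero hgc⟩
  simpa using h

theorem exists_mem_Ioo_deriv_ne_zero {f : ℝ → ℝ} {a b : ℝ} (hab : a < b)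
    (hf : Differentiable ℝ f) (hfab : f a ≠ f b) : ∃ c ∈ Ioo a b, deriv f c ≠ 0 := by
  obtain ⟨c, hc, hslope⟩ := exists_deriv_eq_slope f hab hf.continuous.continuousOn
    hf.differentiableOn
  refine ⟨c, hc, ?_⟩
  rw [hslope]
  exact div_ne_zero (sub_ne_zero.mpr hfab.symm) (sub_ne_zero.mpr hab.ne')

theorem mul_integral_sq_eq_of_ode {φ : ℝ → ℝ} {a b msq lam : ℝ} (hab : a ≤ b)
    (hφ : ContDiff ℝ 2 φ)
    (hODE : ∀ z ∈ Ioo a b, -(deriv (deriv φ) z) + msq * φ z = lam * φ z) :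
    lam * ∫ z in a..b, φ z ^ 2 =
      (∫ z in a..b, deriv φ z ^ 2) + msq * (∫ z in a..b, φ z ^ 2)
        - (φ b * deriv φ b - φ a * deriv φ a) := by
  have hφ' : ContDiff ℝ 1 (deriv φ) := hφ.iterate_deriv' 1 1
  have hd : Differentiable ℝ φ := hφ.differentiable (by norm_num)
  have hd' : Differentiable ℝ (deriv φ) := hφ'.differentiable one_ne_zero
  have ibp : ∫ z in a..b, φ z * deriv (deriv φ) z
      = φ b * deriv φ b - φ a * deriv φ a - ∫ z in a..b, deriv φ z * deriv φ z :=
    integral_mul_deriv_eq_deriv_mul (fun x _ => hd x |>.hasDerivAt)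
      (fun x _ => hd' x |>.hasDerivAt) (hd'.continuous.intervalIntegrable a b)
      ((contDiff_one_iff_deriv.mp hφ').2.intervalIntegrable a b)
  have hode : ∫ z in a..b, φ z * deriv (deriv φ) z = ∫ z in a..b, (msq - lam) * φ z ^ 2 := by
    refine integral_congr_ae ?_
    filter_upwards [Measure.ae_ne volume b] with x hxb hx
    rw [uIoc_of_le hab] at hx
    linear_combination (-(φ x)) * hODE x ⟨hx.1, lt_of_le_of_ne hx.2 hxb⟩
  rw [hode, intervalIntegral.integral_const_mul] at ibp
  simp only [← sq] at ibp
  linarith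

section BoundaryForm

variable {β₁ β₂ β₁' β₂' : ℝ}

theorem boundary_form_nonneg (hρ : 0 < β₁' * β₂ - β₁ * β₂') (hβ₂' : 0 < β₂') (hβ₁ : 0 ≤ β₁)
    (hβ₂ : β₂ < 0) (u v : ℝ) :
    0 ≤ -(β₁ * u - β₂ * v) * (β₁' * u - β₂' * v) - (β₁' * β₂ - β₁ * β₂') * u * v := by
  -- completing the square in `v`
  have hsquare : -(β₂ * β₂') * (-(β₁ * u - β₂ * v) * (β₁' * u - β₂' * v)
      - (β₁' * β₂ - β₁ * β₂') * u * v)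
      = (β₂ * β₂' * v - β₁ * β₂' * u) ^ 2 + β₁ * β₂' * (β₁' * β₂ - β₁ * β₂') * u ^ 2 := by
    ring
  refine nonneg_of_mul_nonneg_right ?_ (by nlinarith : 0 < -(β₂ * β₂'))
  rw [hsquare]
  positivity

theorem pos_of_energy_identity_of_boundary_eq {msq lam I₀ I₁ u v : ℝ}
    (hρ : 0 < β₁' * β₂ - β₁ * β₂') (hmsq : 0 ≤ msq) (hβ₂' : 0 < β₂') (hβ₁ : 0 ≤ β₁)
    (hβ₂ : β₂ < 0) (hI₀ : 0 ≤ I₀) (hI₁ : 0 < I₁)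
    (henergy : lam * I₀ = I₁ + msq * I₀ - u * v)
    (hbc : -(β₁ * u - β₂ * v) = lam * (β₁' * u - β₂' * v)) :
    0 < lam := by
  set ρ := β₁' * β₂ - β₁ * β₂'
  have hidentity : lam * (ρ * I₀ + (β₁' * u - β₂' * v) ^ 2)
      = ρ * (I₁ + msq * I₀) + (-(β₁ * u - β₂ * v) * (β₁' * u - β₂' * v) - ρ * u * v) := by
    linear_combination ρ * henergy - (β₁' * u - β₂' * v) * hbc
  have hrhs : 0 < ρ * (I₁ + msq * I₀)
      + (-(β₁ * u - β₂ * v) * (β₁' * u - β₂' * v) - ρ * u * v) :=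
    add_pos_of_pos_of_nonneg (by positivity) (boundary_form_nonneg hρ hβ₂' hβ₁ hβ₂ u v)
  exact pos_of_mul_pos_left (hidentity ▸ hrhs) (by positivity)

end BoundaryForm

theorem stmt11_general (ℓ msq β₁ β₂ β₁' β₂' lam : ℝ)
    (hρ : 0 < β₁' * β₂ - β₁ * β₂') (hmsq : 0 ≤ msq)
    (hβ₂' : 0 < β₂') (hβ₁ : 0 ≤ β₁) (hβ₂ : β₂ < 0)
    (φ : ℝ → ℝ) (hφ : ContDiff ℝ 2 φ)
    (hODE : ∀ z ∈ Ioo (0:ℝ) ℓ, -(deriv (deriv φ) z) + msq * φ z = lam * φ z)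
    (h0 : φ 0 = 0)
    (hbc : -(β₁ * φ ℓ - β₂ * deriv φ ℓ) = lam * (β₁' * φ ℓ - β₂' * deriv φ ℓ))
    (hne : ∃ z ∈ Icc (0:ℝ) ℓ, φ z ≠ 0) :
    0 < lam := by
  obtain ⟨z, ⟨hz0, hzℓ⟩, hz⟩ := hne
  have hz_pos : 0 < z := hz0.lt_of_ne (by rintro rfl; exact hz h0)
  have hℓ : 0 < ℓ := hz_pos.trans_le hzℓ
  obtain ⟨c, hc, hc'⟩ := exists_mem_Ioo_deriv_ne_zero hz_pos
    (hφ.differentiable (by norm_num)) (h0.trans_ne hz.symm)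
  have hderiv_sq_pos : 0 < ∫ x in (0:ℝ)..ℓ, deriv φ x ^ 2 :=
    integral_sq_pos_of_continuousOn hℓ (hφ.continuous_deriv (by norm_num)).continuousOn
      ⟨hc.1.le, hc.2.le.trans hzℓ⟩ hc'
  have henergy := mul_integral_sq_eq_of_ode hℓ.le hφ hODE
  rw [h0, zero_mul, sub_zero] at henergy
  exact pos_of_energy_identity_of_boundary_eq hρ hmsq hβ₂' hβ₁ hβ₂
    (integral_nonneg hℓ.le fun x _ => sq_nonneg (φ x)) hderiv_sq_pos henergy hbc

/-- Positivity of eigenvalues of the Sturm–Liouville problem with an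
eigenvalue-dependent (dynamical) boundary condition at `z = ℓ` and a Dirichlet
condition at `z = 0`, under the sign conditions of Proposition 1. -/
theorem stmt11 (ℓ msq β₁ β₂ β₁' β₂' lam : ℝ) (hℓ : 0 < ℓ)
    (hρ : 0 < β₁' * β₂ - β₁ * β₂') (hmsq : 0 ≤ msq)
    (hβ₂' : 0 < β₂') (hβ₁ : 0 ≤ β₁) (hβ₂ : β₂ < 0) (hβ₁' : β₁' < 0)
    (φ : ℝ → ℝ) (hφ : ContDiff ℝ 2 φ)
    (hODE : ∀ z ∈ Ioo (0:ℝ) ℓ, -(deriv (deriv φ) z) + msq * φ z = lam * φ z)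
    (h0 : φ 0 = 0)
    (hbc : -(β₁ * φ ℓ - β₂ * deriv φ ℓ) = lam * (β₁' * φ ℓ - β₂' * deriv φ ℓ))
    (hne : ∃ z ∈ Icc (0:ℝ) ℓ, φ z ≠ 0) :
    0 < lam :=
  stmt11_general ℓ msq β₁ β₂ β₁' β₂' lam hρ hmsq hβ₂' hβ₁ hβ₂ φ hφ hODE h0 hbc hne
end
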